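/- Let A, B ∈ ℂ with A(A+B) ≠ 0, let (a₃, a₄, a₅, θ) ∈ ℂ⁴ with a₃ ≠ 0, a₄ + 2a₃² = 0, Δ₅ := a₅ − 5a₃³ ≠ 0, and Θ₅ := θ − a₅ ≠ 0, and let (a₃', a₄', a₅', θ') = S_{A,B}(a₃, a₄, a₅, θ). Then a₃' ≠ 0, a₄' + 2a₃'² = 0, Δ₅' := a₅' − 5a₃'³ ≠ 0, Θ₅' := θ' − a₅' ≠ 0, and Δ₅³/(a₃³Θ₅²) = Δ₅'³/(a₃'³Θ₅'²). -/

import Mathlib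

noncomputable def S (A B : ℂ) (p : ℂ × ℂ × ℂ × ℂ) : ℂ × ℂ × ℂ × ℂ :=
  let a3 := p.1
  let a4 := p.2.1
  let a5 := p.2.2.1
  let th := p.2.2.2
  let a3' := (A + B) * a3 / A ^ 2
  let a4' := ((A + B) * a4 - 2 * A * B * a3 * a3') / A ^ 3
  (a3', a4',
   ((A + B) * a5 - (2 * A * B * a4 + B ^ 2 * a3 ^ 2) * a3' - 3 * A ^ 2 * B * a3 * a4') / A ^ 4,
   (A * th + B * a5 - (2 * A * B * a4 + B ^ 2 * a3 ^ 2) * a3' - 3 * A ^ 2 * B * a3 * a4') / A ^ 4)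

theorem S_U2_invariants (A B : ℂ) (h : A * (A + B) ≠ 0) (a₃ a₄ a₅ θ : ℂ)
    (h3 : a₃ ≠ 0) (h4 : a₄ + 2 * a₃ ^ 2 = 0)
    (h5 : a₅ - 5 * a₃ ^ 3 ≠ 0) (hθ : θ - a₅ ≠ 0)
    (a₃' a₄' a₅' θ' : ℂ) (heq : (a₃', a₄', a₅', θ') = S A B (a₃, a₄, a₅, θ)) :
    a₃' ≠ 0 ∧ a₄' + 2 * a₃' ^ 2 = 0 ∧ a₅' - 5 * a₃' ^ 3 ≠ 0 ∧ θ' - a₅' ≠ 0 ∧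
    (a₅ - 5 * a₃ ^ 3) ^ 3 / (a₃ ^ 3 * (θ - a₅) ^ 2)
      = (a₅' - 5 * a₃' ^ 3) ^ 3 / (a₃' ^ 3 * (θ' - a₅') ^ 2) := by
  have hA : A ≠ 0 := fun hA => h (by simp [hA])
  have hAB : A + B ≠ 0 := fun hAB => h (by simp [hAB])
  simp only [S, Prod.mk.injEq] at heq
  obtain ⟨e3, e4, e5, eθ⟩ := heq
  have h4' : a₄ = -2 * a₃ ^ 2 := by linear_combination h4
  subst h4'
  -- closed form for a₄'
  have k4 : a₄' = -2 * a₃' ^ 2 := by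
    rw [e4, e3]
    field_simp
    ring
  -- closed form for a₅' - 5 a₃'^3
  have kΔ : a₅' - 5 * a₃' ^ 3 = (A + B) * (a₅ - 5 * a₃ ^ 3) / A ^ 4 := by
    rw [e5, e3]
    field_simp
    ring_nf
  -- closed form for θ' - a₅'
  have kΘ : θ' - a₅' = (θ - a₅) / A ^ 3 := by
    rw [eθ, e5]
    field_simp
    ring_nf
  have k3 : a₃' ≠ 0 := by
    rw [e3]
    exact div_ne_zero (mul_ne_zero hAB h3) (pow_ne_zero _ hA)
  have kΔ' : a₅' - 5 * a₃' ^ 3 ≠ 0 := by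
    rw [kΔ]
    exact div_ne_zero (mul_ne_zero hAB h5) (pow_ne_zero _ hA)
  have kΘ' : θ' - a₅' ≠ 0 := by
    rw [kΘ]
    exact div_ne_zero hθ (pow_ne_zero _ hA)
  refine ⟨k3, by rw [k4]; ring, kΔ', kΘ', ?_⟩
  rw [kΔ, kΘ, e3]
  field_simp
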